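/- Let Ω ⊂ ℝⁿ (n ≥ 2) be open and u : Ω → ℝⁿ twice differentiable and nowhere vanishing, with radial part 𝓡_u and spherical part 𝓢_u. Then: (i) Δu = 𝓡_u Δ𝓢_u + 2 ∇𝓢_u ∇𝓡_u + Δ𝓡_u 𝓢_u; (ii) [∇u]ᵗΔu = 𝓡_u² [∇𝓢_u]ᵗ Δ𝓢_u + 𝓡_u [2[∇𝓢_u]ᵗ[∇𝓢_u] + ⟨𝓢_u, Δ𝓢_u⟩ I_n] ∇𝓡_u + Δ𝓡_u ∇𝓡_u; (iii) ∇(|∇u|²) = 2 𝓡_u |∇𝓢_u|² ∇𝓡_u + 2 𝓡_u² ∇²𝓢_u ∇𝓢_u + 2 ∇²𝓡_u ∇𝓡_u. -/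

import Mathlib

open scoped BigOperators
open Matrix

noncomputable section

/-- Partial derivative `∂g/∂x_j` of a scalar field on `ℝᵐ`. -/
def pdx {m : ℕ} (g : (Fin m → ℝ) → ℝ) (x : Fin m → ℝ) (j : Fin m) : ℝ :=
  fderiv ℝ g x (Pi.single j 1)

/-- Gradient of a scalar field on `ℝᵐ`. -/
def gradx {m : ℕ} (g : (Fin m → ℝ) → ℝ) (x : Fin m → ℝ) : Fin m → ℝ :=
  fun j => pdx g x j

/-- Gradient matrix `∇u`, with entries `(∇u)_{ij} = ∂u_i/∂x_j`. -/
def gradm {n : ℕ} (u : (Fin n → ℝ) → Fin n → ℝ) (x : Fin n → ℝ) :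
    Matrix (Fin n) (Fin n) ℝ :=
  Matrix.of fun i j => pdx (fun z => u z i) x j

/-- Laplacian of a scalar field. -/
def lapx {m : ℕ} (g : (Fin m → ℝ) → ℝ) (x : Fin m → ℝ) : ℝ :=
  ∑ j, pdx (fun z => pdx g z j) x j

/-- Hessian matrix of a scalar field. -/
def hessx {m : ℕ} (g : (Fin m → ℝ) → ℝ) (x : Fin m → ℝ) : Matrix (Fin m) (Fin m) ℝ :=
  Matrix.of fun i j => pdx (fun z => pdx g z j) x i

/-- Componentwise Laplacian of a vector field. -/
def lapv {n : ℕ} (u : (Fin n → ℝ) → Fin n → ℝ) (x : Fin n → ℝ) : Fin n → ℝ :=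
  fun i => lapx (fun z => u z i) x

/-- Squared Euclidean norm of a vector. -/
def norm2 {m : ℕ} (v : Fin m → ℝ) : ℝ := ∑ i, v i ^ 2

/-- Euclidean norm of a vector. -/
def enr {m : ℕ} (v : Fin m → ℝ) : ℝ := Real.sqrt (norm2 v)

/-- Squared Frobenius norm of a matrix, `|E|² = tr (EᵗE)`. -/
def frob2 {n : ℕ} (M : Matrix (Fin n) (Fin n) ℝ) : ℝ := ∑ i, ∑ j, M i j ^ 2

/-- The 2-plane radial variables `y = (y_1, …, y_N)`, `N = ⌈n/2⌉` (0-indexed):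
`y_ℓ = √(x_{2ℓ}² + x_{2ℓ+1}²)` and, when `n` is odd, `y_{N-1} = x_{n-1}`. -/
def yvar {n : ℕ} (x : Fin n → ℝ) (ℓ : Fin ((n+1)/2)) : ℝ :=
  if h : 2 * (ℓ : ℕ) + 1 < n then
    Real.sqrt (x ⟨2*(ℓ:ℕ), by omega⟩ ^ 2 + x ⟨2*(ℓ:ℕ)+1, h⟩ ^ 2)
  else x ⟨n - 1, by have := ℓ.isLt; omega⟩

/-- The vector of 2-plane radial variables of `x`. -/
def yv {n : ℕ} (x : Fin n → ℝ) : Fin ((n+1)/2) → ℝ := fun ℓ => yvar x ℓ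

/-- Inclusion `Fin (n/2) → Fin ((n+1)/2)`, i.e. `d = ⌊n/2⌋` into `N = ⌈n/2⌉`. -/
def dIdx {n : ℕ} (i : Fin (n/2)) : Fin ((n+1)/2) := ⟨(i:ℕ), by have := i.isLt; omega⟩

/-- Partial derivative `∂_ℓ M` of a matrix field on `ℝᴺ`. -/
def pdM {n N : ℕ} (M : (Fin N → ℝ) → Matrix (Fin n) (Fin n) ℝ)
    (y : Fin N → ℝ) (ℓ : Fin N) : Matrix (Fin n) (Fin n) ℝ :=
  Matrix.of fun i j => pdx (fun z => M z i j) y ℓ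

/-- Second partial derivative `∂²_{ℓk} M` of a matrix field on `ℝᴺ`. -/
def pdM2 {n N : ℕ} (M : (Fin N → ℝ) → Matrix (Fin n) (Fin n) ℝ)
    (y : Fin N → ℝ) (ℓ k : Fin N) : Matrix (Fin n) (Fin n) ℝ :=
  Matrix.of fun i j => pdx (fun z => pdM M z ℓ i j) y k

/-- The block diagonal `SO(n)`-valued matrix field `Q[f]`, with `2×2` rotation blocks
`R[f_ℓ(y)]` (and an extra diagonal `1` when `n` is odd). -/
def Qf {n : ℕ} (f : (Fin ((n+1)/2) → ℝ) → Fin (n/2) → ℝ)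
    (y : Fin ((n+1)/2) → ℝ) : Matrix (Fin n) (Fin n) ℝ :=
  Matrix.of fun i j =>
    if h : (i:ℕ)/2 = (j:ℕ)/2 ∧ (i:ℕ)/2 < n/2 then
      (if (i:ℕ) % 2 = 0 then
        (if (j:ℕ) % 2 = 0 then Real.cos (f y ⟨(i:ℕ)/2, h.2⟩)
         else -Real.sin (f y ⟨(i:ℕ)/2, h.2⟩))
       else
        (if (j:ℕ) % 2 = 0 then Real.sin (f y ⟨(i:ℕ)/2, h.2⟩)
         else Real.cos (f y ⟨(i:ℕ)/2, h.2⟩)))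
    else (if i = j then 1 else 0)

/-- The block diagonal rotation matrix `exp(α𝐇) = diag(R[α], …, R[α])`
(an extra diagonal `1` when `n` is odd). -/
def rotM (n : ℕ) (α : ℝ) : Matrix (Fin n) (Fin n) ℝ :=
  Matrix.of fun i j =>
    if (i:ℕ)/2 = (j:ℕ)/2 ∧ (i:ℕ)/2 < n/2 then
      (if (i:ℕ) % 2 = 0 then
        (if (j:ℕ) % 2 = 0 then Real.cos α else -Real.sin α)
       else
        (if (j:ℕ) % 2 = 0 then Real.sin α else Real.cos α))
    else (if i = j then 1 else 0)

/-- The vector `w^k = (0, …, 0, x_{2k}, x_{2k+1}, 0, …, 0)`. -/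
def wv {n : ℕ} (x : Fin n → ℝ) (k : Fin ((n+1)/2)) : Fin n → ℝ :=
  fun j => if (j:ℕ)/2 = (k:ℕ) then x j else 0

/-- The vector `[w^k]^⊥ = (0, …, 0, -x_{2k+1}, x_{2k}, 0, …, 0)` (zero in the odd last slot). -/
def wperp {n : ℕ} (x : Fin n → ℝ) (k : Fin ((n+1)/2)) : Fin n → ℝ :=
  fun j =>
    if h : (j:ℕ)/2 = (k:ℕ) ∧ 2*(k:ℕ)+1 < n then
      (if (j:ℕ) % 2 = 0 then -x ⟨2*(k:ℕ)+1, h.2⟩ else x ⟨2*(k:ℕ), by omega⟩)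
    else 0

/-- The differential operator
`𝓛[u;A,B] = [∇u]ᵗ[∇u]∇A + A [∇u]ᵗΔu + B [∇u]ᵗu`, where `A, B` are evaluated at
`(|x|, |u|², |∇u|²)` and `∇A` is the spatial gradient of `x ↦ A(|x|,|u(x)|²,|∇u(x)|²)`. -/
def LAB {n : ℕ} (A B : ℝ → ℝ → ℝ → ℝ) (u : (Fin n → ℝ) → Fin n → ℝ)
    (x : Fin n → ℝ) : Fin n → ℝ :=
  ((gradm u x)ᵀ * gradm u x) *ᵥ
      gradx (fun z => A (enr z) (norm2 (u z)) (frob2 (gradm u z))) x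
    + A (enr x) (norm2 (u x)) (frob2 (gradm u x)) • ((gradm u x)ᵀ *ᵥ lapv u x)
    + B (enr x) (norm2 (u x)) (frob2 (gradm u x)) • ((gradm u x)ᵀ *ᵥ u x)

/-- The annulus `𝕏ₙ = {x : a < |x| < b}` in `ℝⁿ`. -/
def Xann (n : ℕ) (a b : ℝ) : Set (Fin n → ℝ) := {x | a < enr x ∧ enr x < b}

/-- The region `𝔸ₙ = {y : a < ‖y‖ < b}` (with the 2-plane radial coordinates positive). -/
def Ann (n : ℕ) (a b : ℝ) : Set (Fin ((n+1)/2) → ℝ) :=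
  {y | a < enr y ∧ enr y < b ∧ ∀ ℓ : Fin ((n+1)/2), 2*(ℓ:ℕ)+1 < n → 0 < y ℓ}

/-- `𝒥(y) = y_1 ⋯ y_d`. -/
def Jac (n : ℕ) (y : Fin ((n+1)/2) → ℝ) : ℝ :=
  ∏ ℓ : Fin ((n+1)/2), if 2*(ℓ:ℕ)+1 < n then y ℓ else 1

/-- The argument `ξ = n + Σ_j y_j² |∇f_j|²`. -/
def xiArg (n : ℕ) (f : (Fin ((n+1)/2) → ℝ) → Fin (n/2) → ℝ)
    (y : Fin ((n+1)/2) → ℝ) : ℝ :=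
  (n : ℝ) + ∑ j : Fin (n/2), (y (dIdx j))^2 * norm2 (gradx (fun z => f z j) y)

/-- The coefficients `𝒜_i(y,∇f) = y_i² A(z, z², n + Σ_j y_j²|∇f_j|²) 𝒥(y)`, `z = ‖y‖`. -/
def coefA (n : ℕ) (A : ℝ → ℝ → ℝ → ℝ) (f : (Fin ((n+1)/2) → ℝ) → Fin (n/2) → ℝ)
    (i : Fin (n/2)) (y : Fin ((n+1)/2) → ℝ) : ℝ :=
  (y (dIdx i))^2 * A (enr y) ((enr y)^2) (xiArg n f y) * Jac n y

/-- `div [𝒜_i(y,∇f) ∇f_i]`, divergence taken in the `y` variables. -/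
def divA (n : ℕ) (A : ℝ → ℝ → ℝ → ℝ) (f : (Fin ((n+1)/2) → ℝ) → Fin (n/2) → ℝ)
    (i : Fin (n/2)) (y : Fin ((n+1)/2) → ℝ) : ℝ :=
  ∑ k, pdx (fun z => coefA n A f i z * pdx (fun w => f w i) z k) y k

/-- The curl of a vector field, `[curl U]_{ij} = ∂_j U_i − ∂_i U_j`. -/
def curlm {n : ℕ} (U : (Fin n → ℝ) → Fin n → ℝ) (x : Fin n → ℝ) :
    Matrix (Fin n) (Fin n) ℝ :=
  Matrix.of fun i j => pdx (fun z => U z i) x j - pdx (fun z => U z j) x i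

end

/-!
Write `u = R • S` with `|S| = 1`. Differentiating `|S|² = 1` gives `Sᵗ ∇S = 0`, so the two
pieces of `∇u = S ⊗ ∇R + R ∇S` are orthogonal. Then (i) is the product rule for the
Laplacian, (ii) is (i) multiplied by `[∇u]ᵗ`, simplified with `|S| = 1` and `Sᵗ ∇S = 0`, and (iii)
comes from differentiating the pointwise identity `|∇u|² = |∇R|² + R² |∇S|²`.
-/

open Filter Topology

section Calculus

variable {m : ℕ} {x : Fin m → ℝ} {f g : (Fin m → ℝ) → ℝ}

theorem pdx_congr (h : f =ᶠ[𝓝 x] g) : pdx f x = pdx g x := by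
  ext j; unfold pdx; rw [h.fderiv_eq]

theorem pdx_const (c : ℝ) (j : Fin m) : pdx (fun _ => c) x j = 0 := by
  simp [pdx]

theorem pdx_add (hf : DifferentiableAt ℝ f x) (hg : DifferentiableAt ℝ g x) (j : Fin m) :
    pdx (fun z => f z + g z) x j = pdx f x j + pdx g x j := by
  simp [pdx, fderiv_fun_add hf hg]

theorem pdx_mul (hf : DifferentiableAt ℝ f x) (hg : DifferentiableAt ℝ g x) (j : Fin m) :
    pdx (fun z => f z * g z) x j = pdx f x j * g x + f x * pdx g x j := by
  simp [pdx, fderiv_fun_mul hf hg]; ring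

theorem pdx_sum {ι : Type*} (s : Finset ι) {F : ι → (Fin m → ℝ) → ℝ}
    (hF : ∀ i ∈ s, DifferentiableAt ℝ (F i) x) (j : Fin m) :
    pdx (fun z => ∑ i ∈ s, F i z) x j = ∑ i ∈ s, pdx (F i) x j := by
  simp [pdx, fderiv_fun_sum hF]

theorem pdx_sq (hf : DifferentiableAt ℝ f x) (j : Fin m) :
    pdx (fun z => f z ^ 2) x j = 2 * f x * pdx f x j := by
  simp only [sq, pdx_mul hf hf]
  ring

theorem pdx_sum_sq {ι : Type*} (s : Finset ι) {F : ι → (Fin m → ℝ) → ℝ}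
    (hF : ∀ i ∈ s, DifferentiableAt ℝ (F i) x) (j : Fin m) :
    pdx (fun z => ∑ i ∈ s, F i z ^ 2) x j = 2 * ∑ i ∈ s, F i x * pdx (F i) x j := by
  rw [pdx_sum s (F := fun i z => F i z ^ 2) (fun i hi => (hF i hi).pow 2), Finset.mul_sum]
  exact Finset.sum_congr rfl fun i hi => by rw [pdx_sq (hF i hi), mul_assoc]

theorem contDiffAt_pdx {k : ℕ} (hg : ContDiffAt ℝ (k + 1) g x) (j : Fin m) :
    ContDiffAt ℝ k (fun z => pdx g z j) x :=
  (ContinuousLinearMap.apply ℝ ℝ (Pi.single j 1 : Fin m → ℝ)).contDiff.contDiffAt.comp x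
    (hg.fderiv_right le_rfl)

theorem differentiableAt_pdx (hg : ContDiffAt ℝ 2 g x) (j : Fin m) :
    DifferentiableAt ℝ (fun z => pdx g z j) x :=
  (contDiffAt_pdx (k := 1) hg j).differentiableAt one_ne_zero

theorem ContDiffAt.eventually_differentiableAt (hg : ContDiffAt ℝ 2 g x) :
    ∀ᶠ z in 𝓝 x, DifferentiableAt ℝ g z :=
  (hg.eventually (by simp)).mono fun _ hz => hz.differentiableAt two_ne_zero

theorem pdx_pdx_mul (hf : ContDiffAt ℝ 2 f x) (hg : ContDiffAt ℝ 2 g x) (j k : Fin m) :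
    pdx (fun z => pdx (fun w => f w * g w) z j) x k
      = pdx (fun z => pdx f z j) x k * g x + pdx f x j * pdx g x k
        + (pdx f x k * pdx g x j + f x * pdx (fun z => pdx g z j) x k) := by
  have hprod : (fun z => pdx (fun w => f w * g w) z j)
      =ᶠ[𝓝 x] fun z => pdx f z j * g z + f z * pdx g z j := by
    filter_upwards [hf.eventually_differentiableAt, hg.eventually_differentiableAt]
      with z hfz hgz using pdx_mul hfz hgz j
  have hf1 := hf.differentiableAt two_ne_zero
  have hg1 := hg.differentiableAt two_ne_zero
  rw [pdx_congr hprod, pdx_add ((differentiableAt_pdx hf j).fun_mul hg1)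
      (hf1.fun_mul (differentiableAt_pdx hg j)),
    pdx_mul (differentiableAt_pdx hf j) hg1, pdx_mul hf1 (differentiableAt_pdx hg j)]

theorem lapx_mul (hf : ContDiffAt ℝ 2 f x) (hg : ContDiffAt ℝ 2 g x) :
    lapx (fun z => f z * g z) x
      = f x * lapx g x + 2 * (gradx g x ⬝ᵥ gradx f x) + lapx f x * g x := by
  simp only [lapx, pdx_pdx_mul hf hg, dotProduct, gradx, Finset.mul_sum, Finset.sum_mul,
    ← Finset.sum_add_distrib]
  exact Finset.sum_congr rfl fun j _ => by ring

theorem gradx_norm2_gradx (hg : ContDiffAt ℝ 2 g x) :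
    gradx (fun z => norm2 (gradx g z)) x = (2:ℝ) • (hessx g x *ᵥ gradx g x) := by
  ext k
  simp only [gradx, norm2, Pi.smul_apply, smul_eq_mul, mulVec, dotProduct, hessx, of_apply]
  rw [pdx_sum_sq _ fun j _ => differentiableAt_pdx hg j]
  simp only [mul_comm]

end Calculus

section Algebra

variable {n : ℕ} {v s r a : Fin n → ℝ} {A : Matrix (Fin n) (Fin n) ℝ}
theorem norm2_pos (hv : v ≠ 0) : 0 < norm2 v := by
  obtain ⟨i, hi⟩ := Function.ne_iff.1 hv
  exact Finset.sum_pos' (fun _ _ => sq_nonneg _) ⟨i, Finset.mem_univ i, sq_pos_of_ne_zero hi⟩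

-- Also true at `v = 0` (as `v i / 0 = 0`), so `u = R • S` holds everywhere, not only where `u ≠ 0`.
theorem enr_smul_div_enr (v : Fin n → ℝ) : enr v • (fun i => v i / enr v) = v := by
  rcases eq_or_ne v 0 with rfl | hv
  · simp [enr, norm2]
  · have henr : enr v ≠ 0 := (Real.sqrt_pos.2 (norm2_pos hv)).ne'
    ext i
    simp only [Pi.smul_apply, smul_eq_mul]
    field_simp

theorem norm2_div_enr (hv : v ≠ 0) : norm2 (fun i => v i / enr v) = 1 := by
  have hsq : enr v ^ 2 = norm2 v := Real.sq_sqrt (norm2_pos hv).le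
  simp only [norm2, div_pow, ← Finset.sum_div]
  rw [← norm2, ← hsq]
  exact div_self (pow_ne_zero 2 (Real.sqrt_pos.2 (norm2_pos hv)).ne')

theorem norm2_eq_dotProduct (v : Fin n → ℝ) : norm2 v = v ⬝ᵥ v := by
  simp [norm2, dotProduct, sq]

theorem frob2_vecMulVec_add_smul (hs : norm2 s = 1) (hA : s ᵥ* A = 0) (ρ : ℝ) :
    frob2 (vecMulVec s r + ρ • A) = norm2 r + ρ ^ 2 * frob2 A := by
  have hcol : ∀ j, ∑ i, (s i * r j + ρ * A i j) ^ 2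
      = r j ^ 2 * norm2 s + 2 * ρ * r j * (s ᵥ* A) j + ρ ^ 2 * ∑ i, A i j ^ 2 := by
    intro j
    simp only [norm2, vecMul, dotProduct, Finset.mul_sum, ← Finset.sum_add_distrib]
    exact Finset.sum_congr rfl fun i _ => by ring
  simp only [frob2, Matrix.add_apply, Matrix.smul_apply, vecMulVec_apply, smul_eq_mul]
  rw [Finset.sum_comm, Finset.sum_congr rfl fun j _ => hcol j, hs, hA]
  simp only [Pi.zero_apply, mul_zero, add_zero, mul_one, Finset.sum_add_distrib,
    ← Finset.mul_sum, norm2, Finset.sum_comm (f := fun i j => A i j ^ 2)]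

theorem transpose_vecMulVec_add_smul_mulVec (hs : norm2 s = 1) (hA : s ᵥ* A = 0) (ρ μ : ℝ) :
    (vecMulVec s r + ρ • A)ᵀ *ᵥ (ρ • a + (2:ℝ) • (A *ᵥ r) + μ • s)
      = ρ ^ 2 • (Aᵀ *ᵥ a) + ρ • (((2:ℝ) • (Aᵀ * A) + (s ⬝ᵥ a) • 1) *ᵥ r) + μ • r := by
  rw [norm2_eq_dotProduct] at hs
  have hAs : Aᵀ *ᵥ s = 0 := by rw [mulVec_transpose, hA]
  have hsAr : s ⬝ᵥ (A *ᵥ r) = 0 := by rw [dotProduct_mulVec, hA, zero_dotProduct]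
  simp only [transpose_add, transpose_vecMulVec, transpose_smul, add_mulVec, smul_mulVec,
    vecMulVec_mulVec, op_smul_eq_smul, mulVec_add, mulVec_smul, hs, hAs,
    hsAr, one_mulVec, ← mulVec_mulVec]
  module

end Algebra

section VectorFields

variable {n : ℕ} {x : Fin n → ℝ} {R : (Fin n → ℝ) → ℝ} {S : (Fin n → ℝ) → Fin n → ℝ}

theorem gradx_frob2_gradm (hS : ∀ i, ContDiffAt ℝ 2 (fun z => S z i) x) :
    gradx (fun z => frob2 (gradm S z)) x
      = (2:ℝ) • fun k => ∑ i, ∑ j, hessx (fun z => S z i) x k j * gradm S x i j := by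
  ext k
  simp only [gradx, frob2, gradm, of_apply, Pi.smul_apply, smul_eq_mul, hessx]
  rw [pdx_sum _ (F := fun i z => ∑ j, pdx (fun w => S w i) z j ^ 2) fun i _ =>
    DifferentiableAt.fun_sum fun j _ => (differentiableAt_pdx (hS i) j).pow 2, Finset.mul_sum]
  refine Finset.sum_congr rfl fun i _ => ?_
  rw [pdx_sum_sq _ fun j _ => differentiableAt_pdx (hS i) j]
  simp only [mul_comm]

theorem gradm_smul (hR : DifferentiableAt ℝ R x)
    (hS : ∀ i, DifferentiableAt ℝ (fun z => S z i) x) :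
    gradm (fun z => R z • S z) x = vecMulVec (S x) (gradx R x) + R x • gradm S x := by
  ext i j
  simp only [gradm, Pi.smul_apply, smul_eq_mul, of_apply, Matrix.add_apply, Matrix.smul_apply,
    vecMulVec_apply, gradx]
  rw [pdx_mul hR (hS i)]
  ring

theorem lapv_smul (hR : ContDiffAt ℝ 2 R x) (hS : ∀ i, ContDiffAt ℝ 2 (fun z => S z i) x) :
    lapv (fun z => R z • S z) x
      = R x • lapv S x + (2:ℝ) • (gradm S x *ᵥ gradx R x) + lapx R x • S x := by
  ext i
  simp only [lapv, Pi.smul_apply, smul_eq_mul, Pi.add_apply]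
  exact lapx_mul hR (hS i)

theorem vecMul_gradm_eq_zero_of_norm2_eq_one (hS : ∀ i, DifferentiableAt ℝ (fun z => S z i) x)
    (hunit : ∀ᶠ z in 𝓝 x, norm2 (S z) = 1) : S x ᵥ* gradm S x = 0 := by
  ext j
  have hconst : pdx (fun z => norm2 (S z)) x j = 0 := by
    rw [pdx_congr (g := fun _ => (1:ℝ)) hunit, pdx_const]
  rw [show (fun z => norm2 (S z)) = fun z => ∑ i, S z i ^ 2 from rfl,
    pdx_sum_sq _ fun i _ => hS i] at hconst
  simpa [vecMul, dotProduct, gradm] using hconst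

theorem eventually_vecMul_gradm_eq_zero_of_norm2_eq_one
    (hS : ∀ i, ContDiffAt ℝ 2 (fun z => S z i) x) (hunit : ∀ᶠ z in 𝓝 x, norm2 (S z) = 1) :
    ∀ᶠ z in 𝓝 x, S z ᵥ* gradm S z = 0 := by
  filter_upwards [hunit.eventually_nhds,
    eventually_all.2 fun i => (hS i).eventually_differentiableAt] with z hz hSz
  exact vecMul_gradm_eq_zero_of_norm2_eq_one hSz hz

theorem eventually_frob2_gradm_smul (hR : ContDiffAt ℝ 2 R x)
    (hS : ∀ i, ContDiffAt ℝ 2 (fun z => S z i) x) (hunit : ∀ᶠ z in 𝓝 x, norm2 (S z) = 1) :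
    ∀ᶠ z in 𝓝 x, frob2 (gradm (fun w => R w • S w) z)
      = norm2 (gradx R z) + R z ^ 2 * frob2 (gradm S z) := by
  filter_upwards [hunit, eventually_vecMul_gradm_eq_zero_of_norm2_eq_one hS hunit,
    hR.eventually_differentiableAt, eventually_all.2 fun i => (hS i).eventually_differentiableAt]
    with z hz hSz hRz hSdz
  rw [gradm_smul hRz hSdz, frob2_vecMulVec_add_smul hz hSz]

theorem gradx_frob2_gradm_smul (hR : ContDiffAt ℝ 2 R x)
    (hS : ∀ i, ContDiffAt ℝ 2 (fun z => S z i) x) (hunit : ∀ᶠ z in 𝓝 x, norm2 (S z) = 1) :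
    gradx (fun z => frob2 (gradm (fun w => R w • S w) z)) x
      = (2 * R x * frob2 (gradm S x)) • gradx R x
        + (2 * R x ^ 2) • (fun k => ∑ i, ∑ j, hessx (fun z => S z i) x k j * gradm S x i j)
        + (2:ℝ) • (hessx R x *ᵥ gradx R x) := by
  have hR1 := hR.differentiableAt two_ne_zero
  have hnorm : DifferentiableAt ℝ (fun z => norm2 (gradx R z)) x :=
    DifferentiableAt.fun_sum fun j _ => (differentiableAt_pdx hR j).pow 2
  have hfrob : DifferentiableAt ℝ (fun z => frob2 (gradm S z)) x :=
    DifferentiableAt.fun_sum fun i _ => DifferentiableAt.fun_sum fun j _ =>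
      (differentiableAt_pdx (hS i) j).pow 2
  ext k
  have hnorm' := congrFun (gradx_norm2_gradx hR) k
  have hfrob' := congrFun (gradx_frob2_gradm hS) k
  simp only [gradx, Pi.smul_apply, smul_eq_mul] at hnorm' hfrob'
  simp only [gradx, Pi.add_apply, Pi.smul_apply, smul_eq_mul]
  rw [pdx_congr (eventually_frob2_gradm_smul hR hS hunit),
    pdx_add hnorm ((hR1.fun_pow 2).fun_mul hfrob), pdx_mul (hR1.fun_pow 2) hfrob, pdx_sq hR1,
    hnorm', hfrob']
  ring

end VectorFields

theorem stmt1_general (n : ℕ) (Ω : Set (Fin n → ℝ))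
    (u : (Fin n → ℝ) → Fin n → ℝ)
    (hud : ∀ x ∈ Ω, ContDiffAt ℝ 2 u x)
    (hu0 : ∀ x ∈ Ω, u x ≠ 0)
    (x : Fin n → ℝ) (hx : x ∈ Ω) :
    let R : (Fin n → ℝ) → ℝ := fun z => enr (u z)
    let S : (Fin n → ℝ) → Fin n → ℝ := fun z i => u z i / enr (u z)
    let Du := gradm u x
    let DS := gradm S x
    let gR := gradx R x
    -- (i)
    (lapv u x = R x • lapv S x + (2:ℝ) • (DS *ᵥ gR) + lapx R x • S x) ∧
    -- (ii)
    (Duᵀ *ᵥ lapv u x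
      = (R x)^2 • (DSᵀ *ᵥ lapv S x)
        + R x • ((((2:ℝ) • (DSᵀ * DS)
            + (S x ⬝ᵥ lapv S x) • (1 : Matrix (Fin n) (Fin n) ℝ)) *ᵥ gR))
        + lapx R x • gR) ∧
    -- (iii)
    (gradx (fun z => frob2 (gradm u z)) x
      = (2 * R x * frob2 DS) • gR
        + (2 * (R x)^2) • (fun k => ∑ i, ∑ j, hessx (fun z => S z i) x k j * DS i j)
        + (2:ℝ) • (hessx R x *ᵥ gR)) := by
  intro R S Du DS gR
  have hu := hud x hx
  have hpos : 0 < norm2 (u x) := norm2_pos (hu0 x hx)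
  have hR : ContDiffAt ℝ 2 R x :=
    (Real.contDiffAt_sqrt hpos.ne').comp x
      (ContDiffAt.sum fun i _ => (contDiffAt_pi.1 hu i).pow 2)
  have hS : ∀ i, ContDiffAt ℝ 2 (fun z => S z i) x :=
    fun i => (contDiffAt_pi.1 hu i).div hR (Real.sqrt_pos.2 hpos).ne'
  have hunit : ∀ᶠ z in 𝓝 x, norm2 (S z) = 1 :=
    (hu.continuousAt.eventually_ne (hu0 x hx)).mono fun z hz => norm2_div_enr hz
  have hRS : u = fun z => R z • S z := funext fun z => (enr_smul_div_enr (u z)).symm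
  have hDu : Du = vecMulVec (S x) gR + R x • DS := by
    rw [show Du = gradm u x from rfl, hRS]
    exact gradm_smul (hR.differentiableAt two_ne_zero) fun i =>
      (hS i).differentiableAt two_ne_zero
  have hΔu : lapv u x = R x • lapv S x + (2:ℝ) • (DS *ᵥ gR) + lapx R x • S x := by
    rw [hRS]; exact lapv_smul hR hS
  refine ⟨hΔu, ?_, ?_⟩
  · have hSDS : S x ᵥ* DS = 0 :=
      vecMul_gradm_eq_zero_of_norm2_eq_one (fun i => (hS i).differentiableAt two_ne_zero) hunit
    rw [hDu, hΔu]
    exact transpose_vecMulVec_add_smul_mulVec hunit.self_of_nhds hSDS _ _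
  · rw [hRS]; exact gradx_frob2_gradm_smul hR hS hunit

/-- Lemma 2.2: second-order identities for the radial and spherical
parts of a nowhere vanishing twice differentiable map `u`. -/
theorem stmt1 (n : ℕ) (hn : 2 ≤ n) (Ω : Set (Fin n → ℝ)) (hΩ : IsOpen Ω)
    (u : (Fin n → ℝ) → Fin n → ℝ)
    (hud : ∀ x ∈ Ω, ContDiffAt ℝ 2 u x)
    (hu0 : ∀ x ∈ Ω, u x ≠ 0)
    (x : Fin n → ℝ) (hx : x ∈ Ω) :
    let R : (Fin n → ℝ) → ℝ := fun z => enr (u z)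
    let S : (Fin n → ℝ) → Fin n → ℝ := fun z i => u z i / enr (u z)
    let Du := gradm u x
    let DS := gradm S x
    let gR := gradx R x
    -- (i)
    (lapv u x = R x • lapv S x + (2:ℝ) • (DS *ᵥ gR) + lapx R x • S x) ∧
    -- (ii)
    (Duᵀ *ᵥ lapv u x
      = (R x)^2 • (DSᵀ *ᵥ lapv S x)
        + R x • ((((2:ℝ) • (DSᵀ * DS)
            + (S x ⬝ᵥ lapv S x) • (1 : Matrix (Fin n) (Fin n) ℝ)) *ᵥ gR))
        + lapx R x • gR) ∧
    -- (iii)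
    (gradx (fun z => frob2 (gradm u z)) x
      = (2 * R x * frob2 DS) • gR
        + (2 * (R x)^2) • (fun k => ∑ i, ∑ j, hessx (fun z => S z i) x k j * DS i j)
        + (2:ℝ) • (hessx R x *ᵥ gR)) :=
  stmt1_general n Ω u hud hu0 x hx
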